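/- arXiv:math/0303379 — 5 statements merged into one kernel-verified Lean document; each statement's English description precedes it below -/
import Mathlib

section
/- If players i and j are interchangeable in the game G, that is, i ≠ j and G(S ∪ {i}) = G(S ∪ {j}) for every coalition S ⊆ A \ {i, j}, then their Shapley uncertainties coincide: R_i(G) = R_j(G). -/
open Finset

noncomputable def shapleyWeight (N : ℕ) (S : Finset (Fin N)) : ℝ :=
  ((Nat.factorial S.card : ℝ) * (Nat.factorial (N - S.card - 1) : ℝ)) / (Nat.factorial N : ℝ)

noncomputable def marginal (N : ℕ) (G : Finset (Fin N) → ℝ) (i : Fin N)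
    (S : Finset (Fin N)) : ℝ :=
  G (insert i S) - G S

noncomputable def shapleyValue (N : ℕ) (G : Finset (Fin N) → ℝ) (i : Fin N) : ℝ :=
  ∑ S ∈ (Finset.univ.erase i).powerset, shapleyWeight N S * marginal N G i S

noncomputable def shapleyUncertainty (N : ℕ) (G : Finset (Fin N) → ℝ) (i : Fin N) : ℝ :=
  ∑ S ∈ (Finset.univ.erase i).powerset,
    shapleyWeight N S * (marginal N G i S - shapleyValue N G i) ^ 2

/-!
Swapping `i` and `j` is a size-preserving bijection from the coalitions avoiding `i` onto those
avoiding `j`, and for interchangeable players it carries the marginal contribution of `i` to that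
of `j`. So any Shapley-weighted sum of a function of the marginal contribution is the same for `i`
and `j`: first the Shapley values agree, and then so do the weighted squared deviations from them.
-/

section SwapCoalitions

variable {α : Type*} [DecidableEq α]

theorem Finset.map_swap_of_notMem {i j : α} {S : Finset α} (hi : i ∉ S) (hj : j ∉ S) :
    S.map (Equiv.swap i j).toEmbedding = S := by
  ext a
  rw [mem_map_equiv, Equiv.symm_swap]
  rcases eq_or_ne a i with rfl | hai
  · simp [hi, hj]
  rcases eq_or_ne a j with rfl | haj
  · simp [hi, hj]
  rw [Equiv.swap_apply_of_ne_of_ne hai haj]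

theorem Finset.sum_powerset_erase_map_swap [Fintype α] {M : Type*} [AddCommMonoid M]
    (i j : α) (F : Finset α → M) :
    ∑ S ∈ (univ.erase i).powerset, F (S.map (Equiv.swap i j).toEmbedding) =
      ∑ S ∈ (univ.erase j).powerset, F S :=
  sum_equiv (Equiv.swap i j).finsetCongr (fun S => by simp [subset_erase, mem_map_equiv])
    fun _ _ => rfl

end SwapCoalitions

section Interchangeable

variable {N : ℕ} {G : Finset (Fin N) → ℝ} {i j : Fin N}

theorem shapleyWeight_map (S : Finset (Fin N)) (e : Fin N ↪ Fin N) :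
    shapleyWeight N (S.map e) = shapleyWeight N S := by
  rw [shapleyWeight, shapleyWeight, card_map]

theorem marginal_map_swap
    (hsym : ∀ S : Finset (Fin N), i ∉ S → j ∉ S → G (insert i S) = G (insert j S))
    {S : Finset (Fin N)} (hi : i ∉ S) :
    marginal N G j (S.map (Equiv.swap i j).toEmbedding) = marginal N G i S := by
  by_cases hj : j ∈ S
  · -- For `S = T ∪ {j}` both sides are `G (T ∪ {i, j}) - G (T ∪ {i})`.
    obtain ⟨T, hjT, rfl⟩ : ∃ T, j ∉ T ∧ S = insert j T :=
      ⟨S.erase j, notMem_erase j S, (insert_erase hj).symm⟩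
    have hiT : i ∉ T := fun h => hi (mem_insert_of_mem h)
    rw [map_insert, map_swap_of_notMem hiT hjT, Equiv.coe_toEmbedding, Equiv.swap_apply_right,
      marginal, marginal, insert_comm, hsym T hiT hjT]
  · rw [map_swap_of_notMem hi hj, marginal, marginal, hsym S hi hj]

theorem sum_shapleyWeight_mul_marginal_eq_of_interchangeable
    (hsym : ∀ S : Finset (Fin N), i ∉ S → j ∉ S → G (insert i S) = G (insert j S))
    (φ : ℝ → ℝ) :
    ∑ S ∈ (univ.erase i).powerset, shapleyWeight N S * φ (marginal N G i S) =
      ∑ S ∈ (univ.erase j).powerset, shapleyWeight N S * φ (marginal N G j S) := by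
  rw [← sum_powerset_erase_map_swap i j]
  refine sum_congr rfl fun S hS => ?_
  rw [shapleyWeight_map, marginal_map_swap hsym (by simpa [subset_erase] using hS)]

theorem shapleyValue_eq_of_interchangeable
    (hsym : ∀ S : Finset (Fin N), i ∉ S → j ∉ S → G (insert i S) = G (insert j S)) :
    shapleyValue N G i = shapleyValue N G j :=
  sum_shapleyWeight_mul_marginal_eq_of_interchangeable hsym id

end Interchangeable

theorem shapley_uncertainty_symmetry_general (N : ℕ) (G : Finset (Fin N) → ℝ)
    (i j : Fin N)
    (hsym : ∀ S : Finset (Fin N), i ∉ S → j ∉ S → G (insert i S) = G (insert j S)) :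
    shapleyUncertainty N G i = shapleyUncertainty N G j := by
  rw [shapleyUncertainty, shapleyUncertainty, ← shapleyValue_eq_of_interchangeable hsym]
  exact sum_shapleyWeight_mul_marginal_eq_of_interchangeable hsym
    fun x => (x - shapleyValue N G i) ^ 2

theorem shapley_uncertainty_symmetry (N : ℕ) (hN : 1 ≤ N) (G : Finset (Fin N) → ℝ)
    (i j : Fin N) (hij : i ≠ j)
    (hsym : ∀ S : Finset (Fin N), i ∉ S → j ∉ S → G (insert i S) = G (insert j S)) :
    shapleyUncertainty N G i = shapleyUncertainty N G j :=
  shapley_uncertainty_symmetry_general N G i j hsym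
end

section
/- (Strong symmetry for two-player games.) In any game G with exactly two players (N = 2), the two players have equal Shapley uncertainty: R_1(G) = R_2(G), even if their Shapley values differ. -/
open Finset
/-! With two players every coalition has weight `1/2`, so `R_i(G)` is the variance of the two
marginals of `i`, namely `((d_iG({j}) - d_iG(∅)) / 2)²`. That difference of marginals is the
interaction `G(A) - G({i}) - G({j}) + G(∅)`, which is symmetric in `i` and `j`. -/

theorem marginal_insert_sub_marginal_comm (N : ℕ) (G : Finset (Fin N) → ℝ) (i j : Fin N)
    (S : Finset (Fin N)) :
    marginal N G i (insert j S) - marginal N G i S =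
      marginal N G j (insert i S) - marginal N G j S := by
  simp only [marginal, Finset.insert_comm i j S]
  ring

theorem shapleyWeight_two_of_card_le_one {S : Finset (Fin 2)} (hS : S.card ≤ 1) :
    shapleyWeight 2 S = 1 / 2 := by
  interval_cases h : S.card <;> norm_num [shapleyWeight, h, Nat.factorial]

theorem powerset_erase_fin_two {i j : Fin 2} (hij : i ≠ j) :
    (univ.erase i).powerset = {∅, {j}} := by
  fin_cases i <;> fin_cases j <;> simp_all <;> decide

theorem sum_shapleyWeight_mul_fin_two {i j : Fin 2} (hij : i ≠ j) (f : Finset (Fin 2) → ℝ) :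
    ∑ S ∈ (univ.erase i).powerset, shapleyWeight 2 S * f S = (f ∅ + f {j}) / 2 := by
  rw [powerset_erase_fin_two hij, sum_pair (empty_ne_singleton j),
    shapleyWeight_two_of_card_le_one (by simp), shapleyWeight_two_of_card_le_one (by simp)]
  ring

theorem shapleyUncertainty_fin_two (G : Finset (Fin 2) → ℝ) {i j : Fin 2} (hij : i ≠ j) :
    shapleyUncertainty 2 G i = ((marginal 2 G i {j} - marginal 2 G i ∅) / 2) ^ 2 := by
  rw [shapleyUncertainty, sum_shapleyWeight_mul_fin_two hij, shapleyValue,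
    sum_shapleyWeight_mul_fin_two hij]
  ring

theorem shapley_uncertainty_strong_symmetry_two_players (G : Finset (Fin 2) → ℝ) :
    shapleyUncertainty 2 G 0 = shapleyUncertainty 2 G 1 := by
  rw [shapleyUncertainty_fin_two G (j := 1) (by decide),
    shapleyUncertainty_fin_two G (j := 0) (by decide)]
  have interaction_symm := marginal_insert_sub_marginal_comm 2 G 0 1 ∅
  rw [insert_empty_eq, insert_empty_eq] at interaction_symm
  rw [interaction_symm]
end

section
/- For every N-player game G with G(∅) = 0 and every player i, the Shapley uncertainty of player i is bounded by the uncertainties of the other players: R_i(G) ≤ (N − 1) · Σ_{j ≠ i} R_j(G). -/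
open Finset

def predSet {N : ℕ} (σ : Equiv.Perm (Fin N)) (j : Fin N) : Finset (Fin N) :=
  Finset.univ.filter (fun k => σ.symm k < σ.symm j)

noncomputable def buildPerm {N : ℕ} (j : Fin N) (S T : Finset (Fin N)) (fs : Fin N)
    (e1 : ↥(Finset.Iio fs) ≃ ↥S) (e2 : ↥(Finset.Ioi fs) ≃ ↥T)
    (hjS : j ∉ S) (hjT : j ∉ T) (hST : ∀ k, k ∈ S → k ∉ T) :
    Equiv.Perm (Fin N) :=
  Equiv.ofBijective (fun p =>
    if h : p < fs then (e1 ⟨p, Finset.mem_Iio.2 h⟩ : Fin N)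
    else if h2 : fs < p then (e2 ⟨p, Finset.mem_Ioi.2 h2⟩ : Fin N) else j)
    (Finite.injective_iff_bijective.mp (by
      intro p q hpq
      dsimp only at hpq
      rcases lt_trichotomy p fs with hp | hp | hp <;>
        rcases lt_trichotomy q fs with hq | hq | hq
      · rw [dif_pos hp, dif_pos hq] at hpq
        exact congrArg Subtype.val (e1.injective (Subtype.ext hpq))
      · rw [dif_pos hp, dif_neg (by simp [hq]), dif_neg (by simp [hq])] at hpq
        exact absurd (hpq ▸ (e1 ⟨p, Finset.mem_Iio.2 hp⟩).2) hjS
      · rw [dif_pos hp, dif_neg (asymm hq), dif_pos hq] at hpq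
        exact absurd ((e2 ⟨q, Finset.mem_Ioi.2 hq⟩).2)
          (hST _ (hpq ▸ (e1 ⟨p, Finset.mem_Iio.2 hp⟩).2))
      · rw [dif_neg (by simp [hp]), dif_neg (by simp [hp]), dif_pos hq] at hpq
        exact absurd (hpq.symm ▸ (e1 ⟨q, Finset.mem_Iio.2 hq⟩).2) hjS
      · exact hp.trans hq.symm
      · rw [dif_neg (by simp [hp]), dif_neg (by simp [hp]),
          dif_neg (asymm hq), dif_pos hq] at hpq
        exact absurd (hpq.symm ▸ (e2 ⟨q, Finset.mem_Ioi.2 hq⟩).2) hjT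
      · rw [dif_neg (asymm hp), dif_pos hp, dif_pos hq] at hpq
        exact absurd ((e2 ⟨p, Finset.mem_Ioi.2 hp⟩).2)
          (hST _ (hpq.symm ▸ (e1 ⟨q, Finset.mem_Iio.2 hq⟩).2))
      · rw [dif_neg (asymm hp), dif_pos hp, dif_neg (by simp [hq]),
          dif_neg (by simp [hq])] at hpq
        exact absurd (hpq ▸ (e2 ⟨p, Finset.mem_Ioi.2 hp⟩).2) hjT
      · rw [dif_neg (asymm hp), dif_pos hp, dif_neg (asymm hq), dif_pos hq] at hpq
        exact congrArg Subtype.val (e2.injective (Subtype.ext hpq))))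

lemma buildPerm_apply_lt {N : ℕ} {j : Fin N} {S T : Finset (Fin N)} {fs : Fin N}
    (e1 : ↥(Finset.Iio fs) ≃ ↥S) (e2 : ↥(Finset.Ioi fs) ≃ ↥T)
    {hjS} {hjT} {hST} {p : Fin N} (h : p < fs) :
    buildPerm j S T fs e1 e2 hjS hjT hST p = (e1 ⟨p, Finset.mem_Iio.2 h⟩ : Fin N) := by
  simp [buildPerm, Equiv.ofBijective_apply, dif_pos h]

lemma buildPerm_apply_gt {N : ℕ} {j : Fin N} {S T : Finset (Fin N)} {fs : Fin N}
    (e1 : ↥(Finset.Iio fs) ≃ ↥S) (e2 : ↥(Finset.Ioi fs) ≃ ↥T)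
    {hjS} {hjT} {hST} {p : Fin N} (h : fs < p) :
    buildPerm j S T fs e1 e2 hjS hjT hST p = (e2 ⟨p, Finset.mem_Ioi.2 h⟩ : Fin N) := by
  simp [buildPerm, Equiv.ofBijective_apply, dif_neg (asymm h), dif_pos h]

lemma buildPerm_apply_fs {N : ℕ} {j : Fin N} {S T : Finset (Fin N)} {fs : Fin N}
    (e1 : ↥(Finset.Iio fs) ≃ ↥S) (e2 : ↥(Finset.Ioi fs) ≃ ↥T)
    {hjS} {hjT} {hST} :
    buildPerm j S T fs e1 e2 hjS hjT hST fs = j := by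
  simp [buildPerm, Equiv.ofBijective_apply]

lemma buildPerm_symm_j {N : ℕ} {j : Fin N} {S T : Finset (Fin N)} {fs : Fin N}
    (e1 : ↥(Finset.Iio fs) ≃ ↥S) (e2 : ↥(Finset.Ioi fs) ≃ ↥T)
    {hjS} {hjT} {hST} :
    (buildPerm j S T fs e1 e2 hjS hjT hST).symm j = fs := by
  rw [Equiv.symm_apply_eq, buildPerm_apply_fs]

lemma predSet_buildPerm {N : ℕ} {j : Fin N} {S : Finset (Fin N)} {fs : Fin N}
    (e1 : ↥(Finset.Iio fs) ≃ ↥S) (e2 : ↥(Finset.Ioi fs) ≃ ↥(Finset.univ.erase j \ S))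
    {hjS} {hjT} {hST} :
    predSet (buildPerm j S _ fs e1 e2 hjS hjT hST) j = S := by
  set σ := buildPerm j S _ fs e1 e2 hjS hjT hST with hσ
  ext k
  simp only [predSet, Finset.mem_filter, Finset.mem_univ, true_and,
    buildPerm_symm_j (hjS := hjS) (hjT := hjT) (hST := hST)]
  rw [show σ.symm j = fs from buildPerm_symm_j e1 e2 (hjS := hjS) (hjT := hjT) (hST := hST)]
  constructor
  · intro h
    have hk : σ (σ.symm k) = k := Equiv.apply_symm_apply _ _
    rw [hσ, buildPerm_apply_lt e1 e2 h] at hk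
    exact hk ▸ (e1 ⟨σ.symm k, Finset.mem_Iio.2 h⟩).2
  · intro hk
    have hq := (e1.symm ⟨k, hk⟩).2
    have hb : σ ((e1.symm ⟨k, hk⟩ : ↥(Finset.Iio fs)) : Fin N) = k := by
      rw [hσ, buildPerm_apply_lt e1 e2 (Finset.mem_Iio.1 hq)]
      rw [show (⟨((e1.symm ⟨k, hk⟩ : ↥(Finset.Iio fs)) : Fin N), _⟩ : ↥(Finset.Iio fs))
            = e1.symm ⟨k, hk⟩ from Subtype.ext rfl, e1.apply_symm_apply]
    rw [← hb, Equiv.symm_apply_apply]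
    exact Finset.mem_Iio.1 hq


lemma predSet_card {N : ℕ} (σ : Equiv.Perm (Fin N)) (j : Fin N) :
    (predSet σ j).card = (σ.symm j : ℕ) := by
  rw [← Fin.card_Iio (σ.symm j)]
  apply Finset.card_bij (fun k _ => σ.symm k)
  · intro a ha
    simpa using (Finset.mem_filter.1 ha).2
  · intro a ha b hb hab
    exact σ.symm.injective hab
  · intro b hb
    exact ⟨σ b, Finset.mem_filter.2 ⟨Finset.mem_univ _, by simpa using hb⟩, by simp⟩

lemma symm_j {N : ℕ} (j : Fin N) (S : Finset (Fin N)) (σ : Equiv.Perm (Fin N))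
    (hσ : predSet σ j = S) (fs : Fin N) (hfs : (fs : ℕ) = S.card) : σ.symm j = fs := by
  apply Fin.ext
  rw [hfs, ← hσ, predSet_card]

lemma memS_iff {N : ℕ} (j : Fin N) (S : Finset (Fin N)) (σ : Equiv.Perm (Fin N))
    (hσ : predSet σ j = S) (k : Fin N) : k ∈ S ↔ σ.symm k < σ.symm j := by
  rw [← hσ]; simp [predSet]

lemma memT_iff {N : ℕ} (j : Fin N) (S : Finset (Fin N)) (σ : Equiv.Perm (Fin N))
    (hσ : predSet σ j = S) (k : Fin N) :
    k ∈ Finset.univ.erase j \ S ↔ σ.symm j < σ.symm k := by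
  rw [Finset.mem_sdiff, Finset.mem_erase, memS_iff j S σ hσ k]
  constructor
  · rintro ⟨⟨hkj, -⟩, hkS⟩
    rcases lt_trichotomy (σ.symm j) (σ.symm k) with h | h | h
    · exact h
    · exact absurd (σ.symm.injective h.symm) hkj
    · exact absurd h hkS
  · intro h
    refine ⟨⟨fun hkj => ?_, Finset.mem_univ _⟩, fun hkS => lt_asymm h hkS⟩
    subst hkj; exact lt_irrefl _ h

noncomputable def fiberEquiv {N : ℕ} (j : Fin N) (S : Finset (Fin N))
    (hjS : j ∉ S) (fs : Fin N) (hfs : (fs : ℕ) = S.card) :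
    {σ : Equiv.Perm (Fin N) // predSet σ j = S} ≃
      ((↥(Finset.Iio fs) ≃ ↥S) × (↥(Finset.Ioi fs) ≃ ↥(Finset.univ.erase j \ S))) where
  toFun σ :=
    (⟨fun p => ⟨σ.1 p, by
        rw [memS_iff j S σ.1 σ.2, Equiv.symm_apply_apply, symm_j j S σ.1 σ.2 fs hfs]
        exact Finset.mem_Iio.1 p.2⟩,
      fun k => ⟨σ.1.symm k, Finset.mem_Iio.2 (by
        rw [← symm_j j S σ.1 σ.2 fs hfs]
        exact (memS_iff j S σ.1 σ.2 k).1 k.2)⟩,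
      fun p => by apply Subtype.ext; simp,
      fun k => by apply Subtype.ext; simp⟩,
     ⟨fun p => ⟨σ.1 p, by
        rw [memT_iff j S σ.1 σ.2, Equiv.symm_apply_apply, symm_j j S σ.1 σ.2 fs hfs]
        exact Finset.mem_Ioi.1 p.2⟩,
      fun k => ⟨σ.1.symm k, Finset.mem_Ioi.2 (by
        rw [← symm_j j S σ.1 σ.2 fs hfs]
        exact (memT_iff j S σ.1 σ.2 k).1 k.2)⟩,
      fun p => by apply Subtype.ext; simp,
      fun k => by apply Subtype.ext; simp⟩)
  invFun fg := ⟨buildPerm j S _ fs fg.1 fg.2 hjS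
      (by simp) (fun k hk => by simp [hk]),
    predSet_buildPerm fg.1 fg.2⟩
  left_inv := by
    rintro ⟨σ, hσ⟩
    apply Subtype.ext; apply Equiv.ext; intro p
    rcases lt_trichotomy p fs with hp | hp | hp
    · rw [buildPerm_apply_lt _ _ hp]; rfl
    · subst hp
      rw [buildPerm_apply_fs, ← symm_j j S σ hσ p hfs, Equiv.apply_symm_apply]
    · rw [buildPerm_apply_gt _ _ hp]; rfl
  right_inv := by
    rintro ⟨e1, e2⟩
    refine Prod.ext ?_ ?_ <;> apply Equiv.ext <;> intro p <;> apply Subtype.ext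
    · show buildPerm j S _ fs e1 e2 hjS (by simp) (fun k hk => by simp [hk]) (p : Fin N) = _
      rw [buildPerm_apply_lt _ _ (Finset.mem_Iio.1 p.2)]
    · show buildPerm j S _ fs e1 e2 hjS (by simp) (fun k hk => by simp [hk]) (p : Fin N) = _
      rw [buildPerm_apply_gt _ _ (Finset.mem_Ioi.1 p.2)]

lemma fiber_card {N : ℕ} (j : Fin N) (S : Finset (Fin N))
    (hS : S ⊆ Finset.univ.erase j) :
    (Finset.univ.filter fun σ : Equiv.Perm (Fin N) => predSet σ j = S).card
      = S.card.factorial * (N - 1 - S.card).factorial := by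
  classical
  have hj : (j : ℕ) < N := j.is_lt
  have hcard : S.card ≤ N - 1 := by
    have h1 := Finset.card_le_card hS
    simpa [Finset.card_erase_of_mem, Finset.card_univ] using h1
  have hjS : j ∉ S := fun h => by simpa using hS h
  set fs : Fin N := ⟨S.card, by omega⟩ with hfsdef
  have hfs : (fs : ℕ) = S.card := rfl
  have h1 : (Finset.univ.filter fun σ : Equiv.Perm (Fin N) => predSet σ j = S).card
      = Fintype.card {σ : Equiv.Perm (Fin N) // predSet σ j = S} :=
    (Fintype.card_subtype _).symm
  rw [h1, Fintype.card_congr (fiberEquiv j S hjS fs hfs), Fintype.card_prod]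
  have c1 : Fintype.card ↥(Finset.Iio fs) = S.card := by
    rw [Fintype.card_coe, Fin.card_Iio]
  have c2 : Fintype.card ↥S = S.card := Fintype.card_coe _
  have c3 : Fintype.card ↥(Finset.Ioi fs) = N - 1 - S.card := by
    rw [Fintype.card_coe, Fin.card_Ioi]
  have c4 : Fintype.card ↥(Finset.univ.erase j \ S) = N - 1 - S.card := by
    rw [Fintype.card_coe, Finset.card_sdiff_of_subset hS, Finset.card_erase_of_mem (Finset.mem_univ j),
      Finset.card_univ, Fintype.card_fin]
  rw [Fintype.card_equiv (Fintype.equivOfCardEq (c1.trans c2.symm)),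
    Fintype.card_equiv (Fintype.equivOfCardEq (c3.trans c4.symm)), c1, c3]


lemma key_sum {N : ℕ} (j : Fin N) (F : Finset (Fin N) → ℝ) :
    ∑ σ : Equiv.Perm (Fin N), F (predSet σ j) =
      ∑ S ∈ (Finset.univ.erase j).powerset,
        ((S.card.factorial : ℝ) * ((N - S.card - 1).factorial : ℝ)) * F S := by
  classical
  rw [← Finset.sum_fiberwise_of_maps_to (g := fun σ : Equiv.Perm (Fin N) => predSet σ j)
      (t := (Finset.univ.erase j).powerset)
      (fun σ _ => by
        rw [Finset.mem_powerset]
        intro k hk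
        have hlt := (Finset.mem_filter.1 hk).2
        exact Finset.mem_erase.2 ⟨fun h => by subst h; exact lt_irrefl _ hlt,
          Finset.mem_univ _⟩)
      (fun σ => F (predSet σ j))]
  refine Finset.sum_congr rfl fun S hS => ?_
  have h2 : ∀ σ ∈ Finset.univ.filter (fun σ : Equiv.Perm (Fin N) => predSet σ j = S),
      F (predSet σ j) = F S := fun σ hσ => by rw [(Finset.mem_filter.1 hσ).2]
  rw [Finset.sum_congr rfl h2, Finset.sum_const, nsmul_eq_mul,
    fiber_card j S (Finset.mem_powerset.1 hS)]
  have h3 : N - 1 - S.card = N - S.card - 1 := by omega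
  rw [h3]; push_cast; ring

lemma value_eq {N : ℕ} (G : Finset (Fin N) → ℝ) (j : Fin N) :
    shapleyValue N G j = (N.factorial : ℝ)⁻¹ * ∑ σ : Equiv.Perm (Fin N),
      marginal N G j (predSet σ j) := by
  rw [key_sum j (marginal N G j), shapleyValue, Finset.mul_sum]
  refine Finset.sum_congr rfl fun S _ => ?_
  rw [shapleyWeight]; ring

lemma uncertainty_eq {N : ℕ} (G : Finset (Fin N) → ℝ) (j : Fin N) :
    shapleyUncertainty N G j = (N.factorial : ℝ)⁻¹ * ∑ σ : Equiv.Perm (Fin N),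
      (marginal N G j (predSet σ j) - shapleyValue N G j) ^ 2 := by
  rw [key_sum j (fun S => (marginal N G j S - shapleyValue N G j) ^ 2),
    shapleyUncertainty, Finset.mul_sum]
  refine Finset.sum_congr rfl fun S _ => ?_
  rw [shapleyWeight]; ring

def upTo {N : ℕ} (σ : Equiv.Perm (Fin N)) (m : ℕ) : Finset (Fin N) :=
  Finset.univ.filter (fun k => (σ.symm k : ℕ) < m)

lemma telescope {N : ℕ} (G : Finset (Fin N) → ℝ) (σ : Equiv.Perm (Fin N)) :
    ∑ j : Fin N, marginal N G j (predSet σ j) = G Finset.univ - G ∅ := by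
  classical
  rw [← Equiv.sum_comp σ (fun j => marginal N G j (predSet σ j))]
  have h1 : ∀ p : Fin N, predSet σ (σ p) = upTo σ (p : ℕ) := by
    intro p; ext k
    simp only [predSet, upTo, Finset.mem_filter, Finset.mem_univ, true_and,
      Equiv.symm_apply_apply, Fin.lt_def]
  have h2 : ∀ p : Fin N, insert (σ p) (upTo σ (p : ℕ)) = upTo σ ((p : ℕ) + 1) := by
    intro p; ext k
    simp only [Finset.mem_insert, upTo, Finset.mem_filter, Finset.mem_univ, true_and]
    have hk : k = σ p ↔ (σ.symm k : ℕ) = (p : ℕ) := by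
      rw [Fin.val_eq_val, Equiv.symm_apply_eq]
    rw [hk]; omega
  have h3 : upTo σ 0 = ∅ := by simp [upTo]
  have h4 : upTo σ N = Finset.univ := by
    apply Finset.eq_univ_of_forall
    intro k; simp [upTo, Fin.is_lt]
  calc ∑ p : Fin N, marginal N G (σ p) (predSet σ (σ p))
      = ∑ p : Fin N, (G (upTo σ ((p : ℕ) + 1)) - G (upTo σ (p : ℕ))) := by
        refine Finset.sum_congr rfl fun p _ => ?_
        rw [marginal, h1, h2]
    _ = ∑ m ∈ Finset.range N, (G (upTo σ (m + 1)) - G (upTo σ m)) :=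
        Fin.sum_univ_eq_sum_range (fun m => G (upTo σ (m + 1)) - G (upTo σ m)) N
    _ = G (upTo σ N) - G (upTo σ 0) := Finset.sum_range_sub (fun m => G (upTo σ m)) N
    _ = G Finset.univ - G ∅ := by rw [h3, h4]

lemma sum_values {N : ℕ} (G : Finset (Fin N) → ℝ) :
    ∑ j : Fin N, shapleyValue N G j = G Finset.univ - G ∅ := by
  classical
  have hf : (N.factorial : ℝ) ≠ 0 := Nat.cast_ne_zero.2 (Nat.factorial_ne_zero N)
  simp_rw [value_eq G]
  rw [← Finset.mul_sum, Finset.sum_comm,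
    Finset.sum_congr rfl (fun σ _ => telescope G σ), Finset.sum_const,
    Finset.card_univ, Fintype.card_perm, Fintype.card_fin, nsmul_eq_mul, ← mul_assoc,
    inv_mul_cancel₀ hf, one_mul]

theorem shapley_uncertainty_bound (N : ℕ) (hN : 1 ≤ N) (G : Finset (Fin N) → ℝ)
    (hG : G ∅ = 0) (i : Fin N) :
    shapleyUncertainty N G i ≤
      ((N : ℝ) - 1) * ∑ j ∈ Finset.univ.erase i, shapleyUncertainty N G j := by
  classical
  have hf : (0 : ℝ) < (N.factorial : ℝ) := by exact_mod_cast N.factorial_pos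
  have hpt : ∀ σ : Equiv.Perm (Fin N),
      (marginal N G i (predSet σ i) - shapleyValue N G i) ^ 2 ≤
        ((N : ℝ) - 1) * ∑ j ∈ Finset.univ.erase i,
          (marginal N G j (predSet σ j) - shapleyValue N G j) ^ 2 := by
    intro σ
    set Y : Fin N → ℝ := fun j => marginal N G j (predSet σ j) - shapleyValue N G j with hY
    show (Y i) ^ 2 ≤ ((N : ℝ) - 1) * ∑ j ∈ Finset.univ.erase i, Y j ^ 2
    have hsum : ∑ j : Fin N, Y j = 0 := by
      rw [hY, Finset.sum_sub_distrib, telescope G σ, sum_values G, sub_self]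
    have hi : Y i = - ∑ j ∈ Finset.univ.erase i, Y j := by
      have h := Finset.add_sum_erase Finset.univ Y (Finset.mem_univ i)
      rw [hsum] at h
      linarith
    rw [hi, neg_sq]
    calc (∑ j ∈ Finset.univ.erase i, Y j) ^ 2
        ≤ (Finset.univ.erase i).card * ∑ j ∈ Finset.univ.erase i, Y j ^ 2 :=
          sq_sum_le_card_mul_sum_sq
      _ = ((N : ℝ) - 1) * ∑ j ∈ Finset.univ.erase i, Y j ^ 2 := by
          rw [Finset.card_erase_of_mem (Finset.mem_univ i), Finset.card_univ,
            Fintype.card_fin]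
          congr 1
          rw [Nat.cast_sub hN, Nat.cast_one]
  rw [uncertainty_eq G i]
  have step1 : ∑ σ : Equiv.Perm (Fin N),
        (marginal N G i (predSet σ i) - shapleyValue N G i) ^ 2
      ≤ ∑ σ : Equiv.Perm (Fin N), ((N : ℝ) - 1) * ∑ j ∈ Finset.univ.erase i,
          (marginal N G j (predSet σ j) - shapleyValue N G j) ^ 2 :=
    Finset.sum_le_sum fun σ _ => hpt σ
  have step2 : (N.factorial : ℝ)⁻¹ * ∑ σ : Equiv.Perm (Fin N),
        ((N : ℝ) - 1) * ∑ j ∈ Finset.univ.erase i,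
          (marginal N G j (predSet σ j) - shapleyValue N G j) ^ 2
      = ((N : ℝ) - 1) * ∑ j ∈ Finset.univ.erase i, shapleyUncertainty N G j := by
    rw [← Finset.mul_sum, Finset.sum_comm, ← mul_assoc,
      mul_comm ((N.factorial : ℝ)⁻¹) ((N : ℝ) - 1), mul_assoc, Finset.mul_sum]
    refine congrArg _ (Finset.sum_congr rfl fun j _ => ?_)
    exact (uncertainty_eq G j).symm
  exact le_trans (mul_le_mul_of_nonneg_left step1 (inv_pos.2 hf).le) (le_of_eq step2)
end

section
/- (Convexity of the Shapley uncertainty.) For every pair of N-player games G and H, every player i, and every α with 0 ≤ α ≤ 1, the Shapley uncertainty satisfies R_i(α·G + (1 − α)·H) ≤ α·R_i(G) + (1 − α)·R_i(H), where the game α·G + (1 − α)·H is defined coalitionwise. -/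
open Finset

/-! For each coalition `S` the deviation `d_iG(S) - V_i(G)` is a linear functional of the game `G`,
so `R_i` is a nonnegative combination of squares of linear functionals, hence convex in `G`. -/

theorem convexOn_sum_mul_sq {ι E : Type*} [AddCommGroup E] [Module ℝ E] (s : Finset ι)
    (w : ι → ℝ) (hw : ∀ j ∈ s, 0 ≤ w j) (L : ι → E →ₗ[ℝ] ℝ) :
    ConvexOn ℝ Set.univ fun x => ∑ j ∈ s, w j * L j x ^ 2 := by
  classical
  induction s using Finset.induction_on with
  | empty => simpa using convexOn_const (0 : ℝ) convex_univ
  | insert j s hj ih =>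
    simp_rw [sum_insert hj]
    have hj_sq : ConvexOn ℝ Set.univ fun x => w j * L j x ^ 2 := by
      simpa using (even_two.convexOn_pow.comp_linearMap (L j)).smul (hw j (mem_insert_self j s))
    exact hj_sq.add (ih fun k hk => hw k (mem_insert_of_mem hk))

theorem shapleyWeight_nonneg (N : ℕ) (S : Finset (Fin N)) : 0 ≤ shapleyWeight N S := by
  unfold shapleyWeight
  positivity

noncomputable def marginalₗ (N : ℕ) (i : Fin N) (S : Finset (Fin N)) :
    (Finset (Fin N) → ℝ) →ₗ[ℝ] ℝ :=
  LinearMap.proj (R := ℝ) (φ := fun _ => ℝ) (insert i S) - LinearMap.proj S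

theorem marginalₗ_apply (N : ℕ) (i : Fin N) (S : Finset (Fin N)) (G : Finset (Fin N) → ℝ) :
    marginalₗ N i S G = marginal N G i S :=
  rfl

noncomputable def shapleyValueₗ (N : ℕ) (i : Fin N) : (Finset (Fin N) → ℝ) →ₗ[ℝ] ℝ :=
  ∑ S ∈ (univ.erase i).powerset, shapleyWeight N S • marginalₗ N i S

theorem shapleyValueₗ_apply (N : ℕ) (i : Fin N) (G : Finset (Fin N) → ℝ) :
    shapleyValueₗ N i G = shapleyValue N G i := by
  simp only [shapleyValueₗ, LinearMap.sum_apply, LinearMap.smul_apply, marginalₗ_apply,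
    smul_eq_mul, shapleyValue]

theorem convexOn_shapleyUncertainty (N : ℕ) (i : Fin N) :
    ConvexOn ℝ Set.univ fun G => shapleyUncertainty N G i := by
  have h := convexOn_sum_mul_sq (univ.erase i).powerset (shapleyWeight N)
    (fun S _ => shapleyWeight_nonneg N S) fun S => marginalₗ N i S - shapleyValueₗ N i
  simpa only [shapleyUncertainty, LinearMap.sub_apply, marginalₗ_apply, shapleyValueₗ_apply]
    using h

theorem shapley_uncertainty_convexity_general (N : ℕ) (G H : Finset (Fin N) → ℝ)
    (i : Fin N) (α : ℝ) (hα0 : 0 ≤ α) (hα1 : α ≤ 1) :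
    shapleyUncertainty N (fun S => α * G S + (1 - α) * H S) i ≤
      α * shapleyUncertainty N G i + (1 - α) * shapleyUncertainty N H i :=
  (convexOn_shapleyUncertainty N i).2 (Set.mem_univ G) (Set.mem_univ H) hα0 (sub_nonneg.2 hα1)
    (add_sub_cancel α 1)

theorem shapley_uncertainty_convexity (N : ℕ) (hN : 1 ≤ N) (G H : Finset (Fin N) → ℝ)
    (i : Fin N) (α : ℝ) (hα0 : 0 ≤ α) (hα1 : α ≤ 1) :
    shapleyUncertainty N (fun S => α * G S + (1 - α) * H S) i ≤
      α * shapleyUncertainty N G i + (1 - α) * shapleyUncertainty N H i :=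
  shapley_uncertainty_convexity_general N G H i α hα0 hα1
end

section
/- (Uncertainty of the majority game.) Let N be odd and define the majority game on N players by G(S) = N if 2·|S| > N and G(S) = 0 otherwise. Then for every player i, the second moment of the marginal contribution under the Shapley distribution equals N, i.e., Σ_{S ⊆ A\{i}} p_i(S)·(d_iG(S))² = N, and hence the Shapley uncertainty is R_i(G) = N − 1; in particular the uncertainty grows without bound as N increases. -/
open Finset

lemma sum_pw_card {α : Type*} [DecidableEq α] (T : Finset α) (f : ℕ → ℝ) :
    ∑ S ∈ T.powerset, f S.card = ∑ j ∈ Finset.range (T.card + 1), (T.card.choose j : ℝ) * f j := by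
  rw [Finset.sum_powerset_apply_card]
  simp only [nsmul_eq_mul]

theorem majority_game_shapley_uncertainty (N : ℕ) (hN : 1 ≤ N) (hodd : Odd N) (i : Fin N) :
    (∑ S ∈ (Finset.univ.erase i).powerset,
        shapleyWeight N S *
          (marginal N (fun S => if 2 * S.card > N then (N : ℝ) else 0) i S) ^ 2 = N) ∧
      shapleyUncertainty N (fun S => if 2 * S.card > N then (N : ℝ) else 0) i =
        (N : ℝ) - 1 := by
  obtain ⟨k, hk⟩ := hodd
  set G : Finset (Fin N) → ℝ := fun S => if 2 * S.card > N then (N : ℝ) else 0 with hG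
  set T := Finset.univ.erase i with hT
  have hcardT : T.card = 2 * k := by
    rw [hT, Finset.card_erase_of_mem (Finset.mem_univ i), Finset.card_univ, Fintype.card_fin]
    omega
  have hmarg : ∀ S ∈ T.powerset, marginal N G i S = if S.card = k then (N : ℝ) else 0 := by
    intro S hS
    have hiS : i ∉ S := fun h => (Finset.mem_erase.1 (Finset.mem_powerset.1 hS h)).1 rfl
    have hc : (insert i S).card = S.card + 1 := Finset.card_insert_of_notMem hiS
    simp only [marginal, hG, hc]
    by_cases h : S.card = k
    · rw [if_pos h, if_pos (by omega), if_neg (by omega)]; ring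
    · rw [if_neg h]
      by_cases h2 : S.card < k
      · rw [if_neg (by omega), if_neg (by omega)]; ring
      · rw [if_pos (by omega), if_pos (by omega)]; ring
  have hNfact : (N.factorial : ℝ) = (N : ℝ) * ((2 * k).factorial : ℝ) := by
    subst hk; push_cast [Nat.factorial_succ]; ring
  have hfactne : ((2 * k).factorial : ℝ) ≠ 0 := by positivity
  have hNne : (N : ℝ) ≠ 0 := by positivity
  have hkey : ((2 * k).choose k : ℝ) * ((k.factorial : ℝ) * (k.factorial : ℝ)) =
      ((2 * k).factorial : ℝ) := by
    have := Nat.choose_mul_factorial_mul_factorial (show k ≤ 2 * k by omega)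
    have h2 : 2 * k - k = k := by omega
    rw [h2] at this
    push_cast [← this]; ring
  have hNk : N - k - 1 = k := by omega
  -- general evaluation of sums of the form  ∑ w(S) * (if card = k then N else 0)^p
  have hsum : ∀ c : ℝ, ∑ S ∈ T.powerset, shapleyWeight N S *
      (if S.card = k then c else 0) = ((2 * k).choose k : ℝ) *
        ((k.factorial : ℝ) * (k.factorial : ℝ) / (N.factorial : ℝ) * c) := by
    intro c
    have h := sum_pw_card T (fun j => ((j.factorial : ℝ) * ((N - j - 1).factorial : ℝ)) /
          (N.factorial : ℝ) * (if j = k then c else 0))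
    rw [hcardT] at h
    simp only [shapleyWeight]
    rw [h, Finset.sum_eq_single_of_mem k (Finset.mem_range.2 (by omega))]
    · rw [if_pos rfl, hNk]
    · intro j _ hj
      rw [if_neg hj]; ring
  have hEval : ((2 * k).choose k : ℝ) * ((k.factorial : ℝ) * (k.factorial : ℝ) /
      (N.factorial : ℝ)) = 1 / (N : ℝ) := by
    have hNfactne : (N.factorial : ℝ) ≠ 0 := by positivity
    field_simp
    rw [hNfact, ← hkey]
    ring
  -- second moment
  have hA : ∑ S ∈ T.powerset, shapleyWeight N S * (marginal N G i S) ^ 2 = (N : ℝ) := by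
    rw [Finset.sum_congr rfl (fun S hS => by
      rw [hmarg S hS, show (if S.card = k then (N:ℝ) else 0) ^ 2 =
        (if S.card = k then (N:ℝ)^2 else 0) from by split_ifs <;> ring])]
    rw [hsum ((N:ℝ)^2), ← mul_assoc, hEval]
    field_simp
  -- Shapley value = 1
  have hB : shapleyValue N G i = 1 := by
    rw [shapleyValue, ← hT, Finset.sum_congr rfl (fun S hS => by rw [hmarg S hS]),
      hsum (N:ℝ), ← mul_assoc, hEval]
    field_simp
  -- total weight = 1
  have hC : ∑ S ∈ T.powerset, shapleyWeight N S = 1 := by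
    have h := sum_pw_card T (fun j => ((j.factorial : ℝ) * ((N - j - 1).factorial : ℝ)) /
          (N.factorial : ℝ))
    rw [hcardT] at h
    simp only [shapleyWeight]
    rw [h]
    rw [Finset.sum_congr rfl (fun j hj => show ((2*k).choose j : ℝ) *
        ((j.factorial : ℝ) * ((N - j - 1).factorial : ℝ) / (N.factorial : ℝ)) = 1 / (N : ℝ) from ?_)]
    · rw [Finset.sum_const, Finset.card_range, nsmul_eq_mul]
      rw [hk]
      push_cast
      field_simp
    · have hj' : j ≤ 2 * k := by have := Finset.mem_range.1 hj; omega
      have h1 : N - j - 1 = 2 * k - j := by omega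
      have hkey2 := Nat.choose_mul_factorial_mul_factorial hj'
      have hkey2' : ((2*k).choose j : ℝ) * ((j.factorial : ℝ) * ((2*k - j).factorial : ℝ)) =
          ((2 * k).factorial : ℝ) := by push_cast [← hkey2]; ring
      rw [h1, show ((2*k).choose j : ℝ) * ((j.factorial : ℝ) * ((2*k - j).factorial : ℝ) /
          (N.factorial : ℝ)) = (((2*k).choose j : ℝ) * ((j.factorial : ℝ) *
          ((2*k - j).factorial : ℝ))) / (N.factorial : ℝ) from by ring, hkey2', hNfact]
      rw [mul_comm (N : ℝ), div_mul_eq_div_div]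
      rw [div_self hfactne]
  refine ⟨hA, ?_⟩
  rw [shapleyUncertainty, ← hT,
    Finset.sum_congr rfl (fun S hS => show shapleyWeight N S *
      (marginal N G i S - shapleyValue N G i) ^ 2 =
      shapleyWeight N S * (marginal N G i S) ^ 2 -
        2 * shapleyValue N G i * (shapleyWeight N S * marginal N G i S) +
        (shapleyValue N G i) ^ 2 * shapleyWeight N S from by ring)]
  rw [Finset.sum_add_distrib, Finset.sum_sub_distrib, ← Finset.mul_sum, ← Finset.mul_sum,
    hA, hC, ← shapleyValue, hB]
  ring
end
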